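/- arXiv:1703.07983 — 6 statements merged into one kernel-verified Lean document; each statement's English description precedes it below -/
import Mathlib

section
/- For all x ∈ [0, 0.441], √((1/2)(1 − √(1 − x²))) ≤ x/2 + 4x², i.e., the exact distance formula is bounded by the estimate of Walters' theorem on the range where that estimate is nontrivial. -/
/-!
Rationalising, `1 - √(1 - x²) = x² / (1 + √(1 - x²))`, and `√(1 - x²) ≥ 1 - x²` on `[0, 1]`.
Hence `d(x)² ≤ x² / (2 (2 - x²))`, and comparing with `(x/2 + 4x²)² = x² (1/2 + 4x)²` leaves a
polynomial inequality that holds on all of `[0, 1]`, with equality only at `x = 0`.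
-/

open Real

lemma one_sub_sqrt_one_sub_sq_mul_one_add {x : ℝ} (hx : x ^ 2 ≤ 1) :
    (1 - √(1 - x ^ 2)) * (1 + √(1 - x ^ 2)) = x ^ 2 := by
  have hsq : √(1 - x ^ 2) ^ 2 = 1 - x ^ 2 := sq_sqrt (by linarith)
  linear_combination -hsq

lemma two_sub_sq_mul_sq_add_le {x : ℝ} (hx0 : 0 ≤ x) (hx1 : x ≤ 1) :
    1 / 2 ≤ (2 - x ^ 2) * (1 / 2 + 4 * x) ^ 2 := by
  nlinarith [mul_nonneg hx0 (sub_nonneg.2 hx1), mul_nonneg (mul_nonneg hx0 hx0) (sub_nonneg.2 hx1),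
    mul_nonneg (pow_nonneg hx0 3) (sub_nonneg.2 hx1)]

lemma half_one_sub_sqrt_one_sub_sq_le {x : ℝ} (hx0 : 0 ≤ x) (hx1 : x ≤ 1) :
    1 / 2 * (1 - √(1 - x ^ 2)) ≤ (x / 2 + 4 * x ^ 2) ^ 2 := by
  have hx2 : x ^ 2 ≤ 1 := pow_le_one₀ hx0 hx1
  set s := √(1 - x ^ 2)
  have hs : 1 - x ^ 2 ≤ s := le_sqrt_self_iff.2 (by linarith [sq_nonneg x])
  have hprod : (1 - s) * (1 + s) = x ^ 2 := one_sub_sqrt_one_sub_sq_mul_one_add hx2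
  have hs1 : 0 < 1 + s := by positivity
  have key : x ^ 2 / 2 ≤ (1 + s) * (x / 2 + 4 * x ^ 2) ^ 2 :=
    calc x ^ 2 / 2 = x ^ 2 * (1 / 2) := by ring
      _ ≤ x ^ 2 * ((2 - x ^ 2) * (1 / 2 + 4 * x) ^ 2) := by
        gcongr; exact two_sub_sq_mul_sq_add_le hx0 hx1
      _ ≤ x ^ 2 * ((1 + s) * (1 / 2 + 4 * x) ^ 2) := by gcongr; linarith
      _ = (1 + s) * (x / 2 + 4 * x ^ 2) ^ 2 := by ring
  refine le_of_mul_le_mul_left ?_ hs1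
  linear_combination key + hprod / 2

theorem sqrt_half_one_sub_sqrt_one_sub_sq_le {x : ℝ} (hx0 : 0 ≤ x) (hx1 : x ≤ 1) :
    √(1 / 2 * (1 - √(1 - x ^ 2))) ≤ x / 2 + 4 * x ^ 2 :=
  sqrt_le_iff.2 ⟨by positivity, half_one_sub_sqrt_one_sub_sq_le hx0 hx1⟩

/-- For all x ∈ [0, 0.441], √((1/2)(1 − √(1 − x²))) ≤ x/2 + 4x². -/
theorem stmt4 (x : ℝ) (hx : x ∈ Set.Icc (0:ℝ) 0.441) :
    Real.sqrt (1/2 * (1 - Real.sqrt (1 - x^2))) ≤ x/2 + 4*x^2 :=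
  sqrt_half_one_sub_sqrt_one_sub_sq_le hx.1 (by linarith [hx.2])
end

section
/- Let t ∈ (0,1), e = [[t, √(t(1−t))],[√(t(1−t)), 1−t]], u = diag(1,−1), and q₀ = (1/2)[[1,1],[1,1]]. Then q₀ is an orthogonal projection with q₀·u·q₀ = 0, and ‖e − q₀‖ = √((1/2)(1 − √(1 − (2t−1)²))). -/
/-!
Put `s = √(t(1-t))`. The difference `e - q₀` is self-adjoint and squares to the scalar
`(1/2 - s) • 1`, so the C⋆-identity gives `‖e - q₀‖² = 1/2 - s`; and
`1 - (2t-1)² = 4t(1-t) = (2s)²`.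
-/

open scoped Matrix Matrix.Norms.L2Operator

theorem IsSelfAdjoint.norm_eq_sqrt_of_mul_self_eq_smul_one {𝕜 E : Type*} [NormedField 𝕜]
    [NormedRing E] [StarRing E] [CStarRing E] [NormedAlgebra 𝕜 E] [NormOneClass E]
    {a : E} (ha : IsSelfAdjoint a) {c : 𝕜} (h : a * a = c • 1) : ‖a‖ = √‖c‖ := by
  rw [← Real.sqrt_sq (norm_nonneg a), ← ha.norm_mul_self, h, norm_smul, norm_one, mul_one]

theorem sqrt_one_sub_two_mul_sub_one_sq (t : ℝ) :
    √(1 - (2 * t - 1) ^ 2) = 2 * √(t * (1 - t)) := by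
  rw [show 1 - (2 * t - 1) ^ 2 = 2 ^ 2 * (t * (1 - t)) by ring, Real.sqrt_mul (by positivity),
    Real.sqrt_sq zero_le_two]

theorem sqrt_mul_one_sub_le_half (t : ℝ) : √(t * (1 - t)) ≤ 1 / 2 :=
  Real.sqrt_le_iff.mpr ⟨by norm_num, by nlinarith [sq_nonneg (2 * t - 1)]⟩

namespace Matrix

noncomputable def halfOnes : Matrix (Fin 2) (Fin 2) ℂ := (1 / 2 : ℂ) • !![1, 1; 1, 1]

theorem isStarProjection_halfOnes : IsStarProjection halfOnes where
  isIdempotentElem := by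
    ext i j; fin_cases i <;> fin_cases j <;> simp [halfOnes, mul_apply, Fin.sum_univ_two] <;> ring
  isSelfAdjoint := by
    ext i j; fin_cases i <;> fin_cases j <;> simp [halfOnes]

theorem halfOnes_mul_diag_one_neg_one_mul_halfOnes :
    halfOnes * !![1, 0; 0, -1] * halfOnes = 0 := by
  ext i j; fin_cases i <;> fin_cases j <;> simp [halfOnes, mul_apply, Fin.sum_univ_two]

theorem isSelfAdjoint_sub_halfOnes (t s : ℝ) :
    IsSelfAdjoint (!![(t : ℂ), (s : ℂ); (s : ℂ), 1 - (t : ℂ)] - halfOnes) := by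
  ext i j; fin_cases i <;> fin_cases j <;> simp [halfOnes]

theorem sub_halfOnes_mul_self {t s : ℝ} (hs : s ^ 2 = t * (1 - t)) :
    (!![(t : ℂ), (s : ℂ); (s : ℂ), 1 - (t : ℂ)] - halfOnes) *
      (!![(t : ℂ), (s : ℂ); (s : ℂ), 1 - (t : ℂ)] - halfOnes) = ((1 / 2 - s : ℝ) : ℂ) • 1 := by
  have hs' : (s : ℂ) ^ 2 = t * (1 - t) := by exact_mod_cast hs
  ext i j; fin_cases i <;> fin_cases j <;>
    simp [halfOnes, mul_apply, Fin.sum_univ_two]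
  · linear_combination hs'
  · ring
  · ring
  · linear_combination hs'

end Matrix

open Matrix in
/-- For t ∈ (0,1), q₀ = (1/2)[[1,1],[1,1]] is an orthogonal projection with
q₀·u·q₀ = 0 (u = diag(1,−1)), and ‖e − q₀‖ = √((1/2)(1 − √(1 − (2t−1)²))). -/
theorem stmt8 (t : ℝ) (ht : t ∈ Set.Ioo (0:ℝ) 1)
    (e u q₀ : Matrix (Fin 2) (Fin 2) ℂ)
    (he : e = !![(t:ℂ), (Real.sqrt (t*(1-t)) : ℂ);
                 (Real.sqrt (t*(1-t)) : ℂ), 1 - (t:ℂ)])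
    (hu : u = !![1, 0; 0, -1])
    (hq : q₀ = (1/2 : ℂ) • !![1, 1; 1, 1]) :
    q₀ᴴ = q₀ ∧ q₀ * q₀ = q₀ ∧ q₀ * u * q₀ = 0 ∧
    ‖e - q₀‖ = Real.sqrt (1/2 * (1 - Real.sqrt (1 - (2*t - 1)^2))) := by
  obtain ⟨ht₀, ht₁⟩ := ht
  change q₀ = halfOnes at hq
  subst he hu hq
  refine ⟨isStarProjection_halfOnes.isSelfAdjoint, isStarProjection_halfOnes.isIdempotentElem,
    halfOnes_mul_diag_one_neg_one_mul_halfOnes, ?_⟩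
  have hs : √(t * (1 - t)) ^ 2 = t * (1 - t) := Real.sq_sqrt (by nlinarith)
  rw [(isSelfAdjoint_sub_halfOnes _ _).norm_eq_sqrt_of_mul_self_eq_smul_one
      (sub_halfOnes_mul_self hs), Complex.norm_real,
    Real.norm_of_nonneg (by linarith [sqrt_mul_one_sub_le_half t]),
    sqrt_one_sub_two_mul_sub_one_sq]
  congr 1; ring
end

section
/- Let t ∈ (0,1), e = [[t, √(t(1−t))],[√(t(1−t)), 1−t]], u = diag(1,−1). For every 2×2 orthogonal projection q with quq = 0, we have ‖e − q‖ ≥ √((1/2)(1 − √(1 − (2t−1)²))). Hence the distance from e to the set {q : q = q* = q², quq = 0} equals √((1/2)(1 − √(1 − ‖eue‖²))). -/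
open scoped Matrix Matrix.Norms.L2Operator ComplexConjugate

/-!
Put `s = √(t(1-t))`, so that `e` is a rank-one projection, `e u e = (2t-1) e` and
`1 - (2t-1)² = 4s²`; both sides of the claim are then `√(1/2 - s)`. The admissible `q` are `0`,
at distance `‖e‖ = 1`, and `(1/2)[[1, ω], [ω̄, 1]]` with `|ω| = 1`. For the latter `e - q` is
traceless self-adjoint, hence a scalar multiple of a unitary, and
`‖e - q‖² = (t - 1/2)² + |s - ω/2|² ≥ (1/4 - s²) + (1/2 - s)² = 1/2 - s`,
with equality at `ω = 1`.
-/

theorem IsStarProjection.norm_eq_one {A : Type*} [NonUnitalNormedRing A] [StarRing A]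
    [CStarRing A] {p : A} (hp : IsStarProjection p) (hp0 : p ≠ 0) : ‖p‖ = 1 := by
  have h : ‖p‖ * ‖p‖ = ‖p‖ := by
    rw [← CStarRing.norm_star_mul_self, hp.isSelfAdjoint.star_eq, hp.isIdempotentElem.eq]
  exact (mul_eq_right₀ (norm_ne_zero_iff.mpr hp0)).mp h

theorem CStarRing.norm_eq_sqrt_of_star_mul_self_eq {A : Type*} [CStarAlgebra A] [Nontrivial A]
    {x : A} {c : ℝ} (hc : 0 ≤ c) (h : star x * x = (c : ℂ) • 1) : ‖x‖ = √c := by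
  rw [eq_comm, Real.sqrt_eq_iff_mul_self_eq hc (norm_nonneg x), ← CStarRing.norm_star_mul_self, h,
    norm_smul, CStarRing.norm_one, mul_one, Complex.norm_real, Real.norm_of_nonneg hc]

namespace Matrix

theorem norm_fin_two_traceless_selfAdjoint (α : ℝ) (β : ℂ) :
    ‖!![(α : ℂ), β; conj β, -α]‖ = √(α ^ 2 + ‖β‖ ^ 2) := by
  refine CStarRing.norm_eq_sqrt_of_star_mul_self_eq (by positivity) ?_
  rw [star_eq_conjTranspose]
  push_cast
  rw [← Complex.conj_mul']
  ext i j
  fin_cases i <;> fin_cases j <;> simp [mul_apply, Fin.sum_univ_two] <;> ring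

theorem eq_zero_or_eq_half_smul_of_mul_diag_mul_eq_zero {q : Matrix (Fin 2) (Fin 2) ℂ}
    (hq : qᴴ = q) (hqq : q * q = q) (hquq : q * !![1, 0; 0, -1] * q = 0) :
    q = 0 ∨ ∃ ω : ℂ, ‖ω‖ = 1 ∧ q = (2⁻¹ : ℂ) • !![1, ω; conj ω, 1] := by
  have hq10 : q 1 0 = conj (q 0 1) := (congrFun₂ hq 1 0).symm.trans (conjTranspose_apply q 0 1)
  have hqq00 := congrFun₂ hqq 0 0
  have hquq00 := congrFun₂ hquq 0 0
  have hquq01 := congrFun₂ hquq 0 1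
  have hquq11 := congrFun₂ hquq 1 1
  simp only [mul_apply, Fin.sum_univ_two, hq10, of_apply, cons_val', cons_val_zero, cons_val_one,
    empty_val', cons_val_fin_one, zero_apply] at hqq00 hquq00 hquq01 hquq11
  rw [eta_fin_two q, hq10]
  set a := q 0 0
  set b := q 0 1
  set d := q 1 1
  have hbb : b * conj b = a ^ 2 := by linear_combination -hquq00
  by_cases hb : b = 0
  · left
    have ha : a = 0 := pow_eq_zero_iff two_ne_zero |>.mp (by simpa [hb] using hbb.symm)
    have hd : d = 0 := by simpa [hb] using hquq11
    ext i j
    fin_cases i <;> fin_cases j <;> simp [ha, hb, hd]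
  · right
    have ha0 : a ≠ 0 := fun ha ↦ hb (by simpa [ha] using hbb)
    have ha : a = 2⁻¹ := by
      have h : a * (2 * a - 1) = 0 := by linear_combination hqq00 + hquq00
      linear_combination (mul_eq_zero.mp h).resolve_left ha0 / 2
    have hd : d = 2⁻¹ := by
      have h : b * (a - d) = 0 := by linear_combination hquq01
      linear_combination ha - (mul_eq_zero.mp h).resolve_left hb
    refine ⟨2 * b, ?_, ?_⟩
    · have h : ((‖b‖ ^ 2 : ℝ) : ℂ) = ((2⁻¹ ^ 2 : ℝ) : ℂ) := by
        rw [Complex.ofReal_pow, ← Complex.mul_conj', hbb, ha]; norm_num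
      rw [norm_mul, Complex.norm_two,
        (sq_eq_sq₀ (norm_nonneg b) (by norm_num)).mp (Complex.ofReal_inj.mp h)]
      norm_num
    · ext i j
      fin_cases i <;> fin_cases j <;> simp [ha, hd, map_ofNat]

end Matrix

def traceOneSymm (t s : ℝ) : Matrix (Fin 2) (Fin 2) ℂ := !![(t : ℂ), s; s, 1 - t]

section traceOneSymm

variable {t s : ℝ}

theorem traceOneSymm_ne_zero : traceOneSymm t s ≠ 0 := by
  intro h
  have h00 := congrFun₂ h 0 0
  have h11 := congrFun₂ h 1 1
  simp only [traceOneSymm, Matrix.of_apply, Matrix.cons_val', Matrix.cons_val_zero,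
    Matrix.cons_val_one, Matrix.empty_val', Matrix.cons_val_fin_one, Matrix.zero_apply] at h00 h11
  rw [h00, sub_zero] at h11
  exact one_ne_zero h11

theorem isStarProjection_traceOneSymm (h : s ^ 2 = t * (1 - t)) :
    IsStarProjection (traceOneSymm t s) where
  isIdempotentElem := by
    have h' : (s : ℂ) ^ 2 = t * (1 - t) := by exact_mod_cast h
    ext i j
    fin_cases i <;> fin_cases j <;>
      simp [traceOneSymm, Matrix.mul_apply, Fin.sum_univ_two] <;> grind
  isSelfAdjoint := by
    rw [IsSelfAdjoint, Matrix.star_eq_conjTranspose]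
    ext i j
    fin_cases i <;> fin_cases j <;> simp [traceOneSymm]

theorem norm_traceOneSymm (h : s ^ 2 = t * (1 - t)) : ‖traceOneSymm t s‖ = 1 :=
  (isStarProjection_traceOneSymm h).norm_eq_one traceOneSymm_ne_zero

theorem traceOneSymm_mul_diag_mul (h : s ^ 2 = t * (1 - t)) :
    traceOneSymm t s * !![1, 0; 0, -1] * traceOneSymm t s =
      ((2 * t - 1 : ℝ) : ℂ) • traceOneSymm t s := by
  have h' : (s : ℂ) ^ 2 = t * (1 - t) := by exact_mod_cast h
  ext i j
  fin_cases i <;> fin_cases j <;>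
    simp [traceOneSymm, Matrix.mul_apply, Fin.sum_univ_two] <;> grind

theorem norm_traceOneSymm_sub_half_smul (ω : ℂ) :
    ‖traceOneSymm t s - (2⁻¹ : ℂ) • !![1, ω; conj ω, 1]‖ =
      √((t - 2⁻¹) ^ 2 + ‖s - ω / 2‖ ^ 2) := by
  have h : traceOneSymm t s - (2⁻¹ : ℂ) • !![1, ω; conj ω, 1] =
      !![((t - 2⁻¹ : ℝ) : ℂ), s - ω / 2; conj (s - ω / 2), -((t - 2⁻¹ : ℝ) : ℂ)] := by
    ext i j
    fin_cases i <;> fin_cases j <;> simp [traceOneSymm, map_ofNat] <;> ring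
  rw [h, Matrix.norm_fin_two_traceless_selfAdjoint]

theorem sqrt_half_sub_le_norm_traceOneSymm_sub (hs0 : 0 ≤ s) (h : s ^ 2 = t * (1 - t))
    {q : Matrix (Fin 2) (Fin 2) ℂ} (hq : qᴴ = q) (hqq : q * q = q)
    (hquq : q * !![1, 0; 0, -1] * q = 0) :
    √(2⁻¹ - s) ≤ ‖traceOneSymm t s - q‖ := by
  rcases Matrix.eq_zero_or_eq_half_smul_of_mul_diag_mul_eq_zero hq hqq hquq with
    rfl | ⟨ω, hω, rfl⟩
  · rw [sub_zero, norm_traceOneSymm h, ← Real.sqrt_one]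
    exact Real.sqrt_le_sqrt (by linarith)
  · rw [norm_traceOneSymm_sub_half_smul]
    refine Real.sqrt_le_sqrt ?_
    have hs_le : s ≤ 2⁻¹ := by nlinarith [sq_nonneg (2 * t - 1)]
    have hdist : 2⁻¹ - s ≤ ‖(s : ℂ) - ω / 2‖ := by
      have := norm_sub_norm_le (ω / 2) (s : ℂ)
      rw [norm_sub_rev, norm_div, hω, Complex.norm_two, Complex.norm_real,
        Real.norm_of_nonneg hs0] at this
      linarith
    nlinarith [mul_self_le_mul_self (by linarith) hdist]

theorem norm_traceOneSymm_sub_half_smul_one (h : s ^ 2 = t * (1 - t)) :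
    ‖traceOneSymm t s - (2⁻¹ : ℂ) • !![1, 1; 1, 1]‖ = √(2⁻¹ - s) := by
  have h1 := norm_traceOneSymm_sub_half_smul (t := t) (s := s) 1
  rw [map_one] at h1
  rw [h1, show (s : ℂ) - 1 / 2 = ((s - 2⁻¹ : ℝ) : ℂ) by push_cast; ring, Complex.norm_real,
    Real.norm_eq_abs, sq_abs]
  congr 1
  linear_combination h

end traceOneSymm

theorem half_smul_ones_mem :
    (2⁻¹ : ℂ) • !![(1 : ℂ), 1; 1, 1] ∈ {q : Matrix (Fin 2) (Fin 2) ℂ |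
      qᴴ = q ∧ q * q = q ∧ q * !![1, 0; 0, -1] * q = 0} := by
  refine ⟨?_, ?_, ?_⟩ <;> ext i j <;> fin_cases i <;> fin_cases j <;>
    simp [Matrix.mul_apply, Fin.sum_univ_two] <;> norm_num

/-- For t ∈ (0,1), e as below and u = diag(1,−1): every 2×2 orthogonal
projection q with quq = 0 satisfies ‖e − q‖ ≥ √((1/2)(1 − √(1 − (2t−1)²))), and the
distance from e to the set of such q equals √((1/2)(1 − √(1 − ‖eue‖²))). -/
theorem stmt9 (t : ℝ) (ht : t ∈ Set.Ioo (0:ℝ) 1)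
    (e u : Matrix (Fin 2) (Fin 2) ℂ)
    (he : e = !![(t:ℂ), (Real.sqrt (t*(1-t)) : ℂ);
                 (Real.sqrt (t*(1-t)) : ℂ), 1 - (t:ℂ)])
    (hu : u = !![1, 0; 0, -1]) :
    (∀ q : Matrix (Fin 2) (Fin 2) ℂ, qᴴ = q → q * q = q → q * u * q = 0 →
      ‖e - q‖ ≥ Real.sqrt (1/2 * (1 - Real.sqrt (1 - (2*t - 1)^2)))) ∧
    Metric.infDist e {q : Matrix (Fin 2) (Fin 2) ℂ | qᴴ = q ∧ q * q = q ∧ q * u * q = 0}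
      = Real.sqrt (1/2 * (1 - Real.sqrt (1 - ‖e * u * e‖^2))) := by
  set s := √(t * (1 - t))
  have hs : s ^ 2 = t * (1 - t) := Real.sq_sqrt (by nlinarith [ht.1, ht.2])
  have he : e = traceOneSymm t s := he
  subst he hu
  have hbound : √(1 / 2 * (1 - √(1 - (2 * t - 1) ^ 2))) = √(2⁻¹ - s) := by
    rw [show 1 - (2 * t - 1) ^ 2 = (2 * s) ^ 2 by linear_combination -4 * hs,
      Real.sqrt_sq (by positivity)]
    ring_nf
  have heue : ‖traceOneSymm t s * !![1, 0; 0, -1] * traceOneSymm t s‖ ^ 2 = (2 * t - 1) ^ 2 := by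
    rw [traceOneSymm_mul_diag_mul hs, norm_smul, norm_traceOneSymm hs, mul_one, Complex.norm_real,
      Real.norm_eq_abs, sq_abs]
  have hs0 : 0 ≤ s := Real.sqrt_nonneg _
  refine ⟨fun q hq hqq hquq ↦
    hbound ▸ sqrt_half_sub_le_norm_traceOneSymm_sub hs0 hs hq hqq hquq, ?_⟩
  rw [heue, hbound]
  refine le_antisymm ?_ ((Metric.le_infDist ⟨_, half_smul_ones_mem⟩).mpr fun q hq ↦ ?_)
  · rw [← norm_traceOneSymm_sub_half_smul_one hs, ← dist_eq_norm]
    exact Metric.infDist_le_dist_of_mem half_smul_ones_mem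
  · rw [dist_eq_norm]
    exact sqrt_half_sub_le_norm_traceOneSymm_sub hs0 hs hq.1 hq.2.1 hq.2.2
end

section
/- In ℂ³, let u = diag(1,1,−1), e = diag(1,0,0), and for x,y ∈ ℂ with |x|²+|y|² = 1 let q_{x,y} be as above. Then ‖e − q_{x,y}‖ = √((1 + |y|²)/2). -/
open scoped Matrix Matrix.Norms.L2Operator
open Matrix

/-!
`e` and `q` are the orthogonal projections onto `ℂ e₁` and onto `ℂ (x, y, 1)`. For star
projections `p`, `q` with `p q p = c p` and `q p q = c q` (here `c = |x|² / 2`, the squared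
cosine of the angle between the two lines), `a = p - q` satisfies `a³ = (1 - c) a`. As `a` is
self-adjoint, the C⋆-identity gives `‖a‖⁴ = ‖a⁴‖ = (1 - c) ‖a²‖ = (1 - c) ‖a‖²`, so
`‖a‖² = 1 - c = (1 + |y|²) / 2`.
-/

theorem sub_pow_three_of_isIdempotentElem {S R : Type*} [CommRing S] [Ring R] [Algebra S R]
    {p q : R} {c : S} (hp : IsIdempotentElem p) (hq : IsIdempotentElem q)
    (hpqp : p * q * p = c • p) (hqpq : q * p * q = c • q) :
    (p - q) ^ 3 = (1 - c) • (p - q) := by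
  rw [show (p - q) ^ 3 = p * p * p - p * p * q - p * q * p + p * (q * q) - q * (p * p)
      + q * p * q + q * q * p - q * q * q by noncomm_ring]
  simp only [hp.eq, hq.eq, hpqp, hqpq, sub_smul, smul_sub, one_smul]
  abel

theorem IsSelfAdjoint.norm_sq_of_pow_three_eq_smul {𝕜 E : Type*} [NormedField 𝕜] [NormedRing E]
    [StarRing E] [CStarRing E] [NormedAlgebra 𝕜 E] {a : E} {c : 𝕜} (ha : IsSelfAdjoint a)
    (hne : a ≠ 0) (hcube : a ^ 3 = c • a) : ‖a‖ ^ 2 = ‖c‖ := by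
  have hquartic : a ^ 2 ^ 2 = c • a ^ 2 ^ 1 := by
    rw [show 2 ^ 2 = 3 + 1 by rfl, pow_succ, hcube, smul_mul_assoc, ← pow_two, pow_one]
  have h := congrArg norm hquartic
  rw [norm_smul, ha.norm_pow_two_pow, ha.norm_pow_two_pow] at h
  have hpos : ‖a‖ ^ 2 ≠ 0 := by positivity
  rw [pow_one, show 2 ^ 2 = 2 + 2 by rfl, pow_add] at h
  exact mul_right_cancel₀ hpos h

theorem Matrix.smul_vecMulVec_mul_mul {n α : Type*} [Fintype n] [CommRing α] (a b : α)
    (u u' v v' : n → α) :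
    a • vecMulVec u u' * (b • vecMulVec v v') * (a • vecMulVec u u') =
      (a * b * ((u' ⬝ᵥ v) * (v' ⬝ᵥ u))) • (a • vecMulVec u u') := by
  simp only [smul_mul_smul_comm, vecMulVec_mul_vecMulVec, vecMulVec_smul, smul_smul]
  congr 1
  ring

theorem Matrix.isStarProjection_smul_vecMulVec_star {n 𝕜 : Type*} [Fintype n] [RCLike 𝕜]
    {r : ℝ} {u : n → 𝕜} (h : (r : 𝕜) * (star u ⬝ᵥ u) = 1) :
    IsStarProjection ((r : 𝕜) • vecMulVec u (star u)) where
  isIdempotentElem := by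
    rw [IsIdempotentElem, smul_mul_smul_comm, vecMulVec_mul_vecMulVec, vecMulVec_smul, smul_smul,
      mul_assoc, h, mul_one]
  isSelfAdjoint := by
    simp [IsSelfAdjoint, star_smul, star_eq_conjTranspose]

theorem IsStarProjection.norm_sub_sq_of_mul_mul_eq_smul {𝕜 E : Type*} [NormedField 𝕜]
    [NormedRing E] [StarRing E] [CStarRing E] [NormedAlgebra 𝕜 E] {p q : E} {c : 𝕜}
    (hp : IsStarProjection p) (hq : IsStarProjection q) (hpqp : p * q * p = c • p)
    (hqpq : q * p * q = c • q) (hne : p ≠ q) : ‖p - q‖ ^ 2 = ‖1 - c‖ :=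
  (hp.isSelfAdjoint.sub hq.isSelfAdjoint).norm_sq_of_pow_three_eq_smul (sub_ne_zero.mpr hne)
    (sub_pow_three_of_isIdempotentElem hp.isIdempotentElem hq.isIdempotentElem hpqp hqpq)

/-- In ℂ³ with e = diag(1,0,0) and q_{x,y} as in the paper
(|x|² + |y|² = 1), one has ‖e − q_{x,y}‖ = √((1 + |y|²)/2). -/
theorem stmt13 (x y : ℂ) (hxy : ‖x‖^2 + ‖y‖^2 = 1)
    (e q : Matrix (Fin 3) (Fin 3) ℂ)
    (he : e = Matrix.diagonal ![1, 0, 0])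
    (hq : q = (1/2 : ℂ) • !![x * star x, x * star y, x;
                             star x * y, y * star y, y;
                             star x, star y, 1]) :
    ‖e - q‖ = Real.sqrt ((1 + ‖y‖^2) / 2) := by
  have hnorm : x * star x + y * star y = 1 := by
    simp only [Complex.star_def, Complex.mul_conj']; exact_mod_cast hxy
  have he' : e = ((1 : ℝ) : ℂ) • vecMulVec ![1, 0, 0] (star ![1, 0, 0]) := by
    subst he; ext i j; fin_cases i <;> fin_cases j <;> simp [vecMulVec_apply, -cons_vecMulVec]
  have hq' : q = ((1 / 2 : ℝ) : ℂ) • vecMulVec ![x, y, 1] (star ![x, y, 1]) := by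
    subst hq; ext i j
    fin_cases i <;> fin_cases j <;> simp [vecMulVec_apply, -cons_vecMulVec, mul_comm]
  have hu : star ![1, 0, 0] ⬝ᵥ ![(1 : ℂ), 0, 0] = 1 := by simp [dotProduct, Fin.sum_univ_three]
  have hw : star ![x, y, 1] ⬝ᵥ ![x, y, 1] = 2 := by
    simp [dotProduct, Fin.sum_univ_three] at hnorm ⊢; linear_combination hnorm
  have hne : e ≠ q := fun h => by
    simpa [he, hq] using congrFun (congrFun h 2) 2
  have hc : (1 : ℂ) - (1 : ℝ) * (1 / 2 : ℝ) * ((star ![1, 0, 0] ⬝ᵥ ![x, y, 1]) *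
      (star ![x, y, 1] ⬝ᵥ ![(1 : ℂ), 0, 0])) = ((1 + ‖y‖ ^ 2) / 2 : ℝ) := by
    simp [dotProduct, Fin.sum_univ_three] at hnorm ⊢
    linear_combination (-1/2 : ℂ) * hnorm + (1/2 : ℂ) * Complex.mul_conj' y
  rw [he', hq'] at hne ⊢
  have h := IsStarProjection.norm_sub_sq_of_mul_mul_eq_smul
    (isStarProjection_smul_vecMulVec_star (r := 1) (by rw [hu]; norm_num))
    (isStarProjection_smul_vecMulVec_star (r := 1 / 2) (by rw [hw]; norm_num))
    (smul_vecMulVec_mul_mul _ _ _ _ _ _)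
    (by rw [smul_vecMulVec_mul_mul]; congr 1; ring) hne
  rw [hc, Complex.norm_real, Real.norm_of_nonneg (by positivity)] at h
  rw [← h, Real.sqrt_sq (norm_nonneg _)]
end

section
/- In ℂ³ with u = diag(1,1,−1) and e = diag(1,0,0), the distance from e to the set of orthogonal projections q satisfying quq = 0 equals 1/√2, and it is attained exactly at the projections (1/2)[[1,0,ω],[0,0,0],[conj(ω),0,1]] with |ω| = 1. -/
/-!
If `q` is a projection with `q u q = 0`, every `v` in its range is `u`-isotropic:
`⟪v, u v⟫ = ⟪q v, u q v⟫ = ⟪v, (q u q) v⟫ = 0`, i.e. `|v₀|² + |v₁|² = |v₂|²`, so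
`|v₂|² = ‖v‖² / 2`. As `(e - q) v = (0, -v₁, -v₂)`, this gives
`‖e - q‖² ≥ (|v₁|² + |v₂|²) / ‖v‖² ≥ 1 / 2`. Equality forces `v₁ = 0` and `|v₀| = |v₂|`
for every column `v` of `q`; together with `q j j = ∑ i, |q i j|²` this pins `q` down to
`nearestProj ω` with `|ω| = 1`. The projection `q = 0` is excluded since `‖e‖ = 1`.
-/

open scoped Matrix Matrix.Norms.L2Operator
open Matrix

namespace Matrix

variable {m n 𝕜 : Type*} [Fintype m] [Fintype n] [RCLike 𝕜]

lemma sum_norm_sq_mulVec_le [DecidableEq n] (A : Matrix m n 𝕜) (v : n → 𝕜) :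
    ∑ i, ‖(A *ᵥ v) i‖ ^ 2 ≤ ‖A‖ ^ 2 * ∑ i, ‖v i‖ ^ 2 := by
  have h := l2_opNorm_mulVec A ((EuclideanSpace.equiv n 𝕜).symm v)
  have h2 := pow_le_pow_left₀ (norm_nonneg _) h 2
  rw [mul_pow, EuclideanSpace.norm_sq_eq, EuclideanSpace.norm_sq_eq] at h2
  exact h2

lemma mulVec_col_of_mul_self {R : Type*} [Semiring R] [DecidableEq n] {q : Matrix n n R}
    (hqq : q * q = q) (j : n) :
    q *ᵥ q.col j = q.col j := by
  rw [← mulVec_single_one, mulVec_mulVec, hqq]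

lemma diag_eq_sum_norm_sq {q : Matrix n n 𝕜} (hq : qᴴ = q) (hqq : q * q = q) (j : n) :
    q j j = ((∑ i, ‖q i j‖ ^ 2 : ℝ) : 𝕜) := by
  conv_lhs => rw [← hqq, mul_apply]
  push_cast
  refine Finset.sum_congr rfl fun i _ => ?_
  rw [← RCLike.conj_mul, ← hq, conjTranspose_apply, hq, RCLike.star_def]

lemma star_dotProduct_mulVec_eq_zero {R : Type*} [CommSemiring R] [StarRing R]
    {q u : Matrix n n R} {v : n → R}
    (hq : qᴴ = q) (hquq : q * u * q = 0) (hv : q *ᵥ v = v) :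
    star v ⬝ᵥ (u *ᵥ v) = 0 := by
  calc star v ⬝ᵥ (u *ᵥ v) = star (q *ᵥ v) ⬝ᵥ (u *ᵥ (q *ᵥ v)) := by rw [hv]
    _ = star v ⬝ᵥ ((q * u * q) *ᵥ v) := by
      rw [star_mulVec, hq, ← dotProduct_mulVec, mulVec_mulVec, mulVec_mulVec, Matrix.mul_assoc]
    _ = 0 := by rw [hquq, zero_mulVec, dotProduct_zero]

end Matrix

local notation "𝐮" => (diagonal ![1, 1, -1] : Matrix (Fin 3) (Fin 3) ℂ)
local notation "𝐞" => (diagonal ![1, 0, 0] : Matrix (Fin 3) (Fin 3) ℂ)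

noncomputable def nearestProj (ω : ℂ) : Matrix (Fin 3) (Fin 3) ℂ :=
  (1 / 2 : ℂ) • !![1, 0, ω; 0, 0, 0; star ω, 0, 1]

section NearestProj

variable {ω : ℂ}

lemma conjTranspose_nearestProj : (nearestProj ω)ᴴ = nearestProj ω := by
  ext i j
  fin_cases i <;> fin_cases j <;> simp [nearestProj]

lemma nearestProj_mul_self (hω : ‖ω‖ = 1) : nearestProj ω * nearestProj ω = nearestProj ω := by
  have h : (starRingEnd ℂ) ω * ω = 1 := by simp [Complex.conj_mul', hω]
  ext i j
  fin_cases i <;> fin_cases j <;> simp [nearestProj, mul_apply, Fin.sum_univ_three] <;>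
    grind

lemma nearestProj_mul_u_mul (hω : ‖ω‖ = 1) : nearestProj ω * 𝐮 * nearestProj ω = 0 := by
  have h : (starRingEnd ℂ) ω * ω = 1 := by simp [Complex.conj_mul', hω]
  ext i j
  fin_cases i <;> fin_cases j <;>
    simp [nearestProj, mul_apply, vecMul_diagonal, Fin.sum_univ_three] <;> grind

lemma norm_e_sub_nearestProj (hω : ‖ω‖ = 1) : ‖𝐞 - nearestProj ω‖ = 1 / √2 := by
  have h : (starRingEnd ℂ) ω * ω = 1 := by simp [Complex.conj_mul', hω]
  have hsq : (𝐞 - nearestProj ω)ᴴ * (𝐞 - nearestProj ω) = (1 / 2 : ℂ) • diagonal ![1, 0, 1] := by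
    ext i j
    fin_cases i <;> fin_cases j <;> simp [nearestProj, mul_apply, Fin.sum_univ_three, map_ofNat] <;>
      grind
  have hdiag : ‖(diagonal ![1, 0, 1] : Matrix (Fin 3) (Fin 3) ℂ)‖ = 1 := by
    rw [l2_opNorm_diagonal]
    refine le_antisymm ((pi_norm_le_iff_of_nonneg zero_le_one).2 fun i => ?_) ?_
    · fin_cases i <;> simp
    · simpa using norm_le_pi_norm (![1, 0, 1] : Fin 3 → ℂ) 0
  have h2 := l2_opNorm_conjTranspose_mul_self (𝐞 - nearestProj ω)
  rw [hsq, norm_smul, hdiag, mul_one] at h2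
  rw [one_div, ← Real.sqrt_inv, eq_comm, Real.sqrt_eq_iff_mul_self_eq (by norm_num) (norm_nonneg _),
    ← h2]
  norm_num

end NearestProj

section RangeVector

variable {q : Matrix (Fin 3) (Fin 3) ℂ} {v : Fin 3 → ℂ}

lemma norm_sq_add_norm_sq_eq_of_mulVec_eq (hq : qᴴ = q) (hquq : q * 𝐮 * q = 0)
    (hv : q *ᵥ v = v) : ‖v 0‖ ^ 2 + ‖v 1‖ ^ 2 = ‖v 2‖ ^ 2 := by
  have h := star_dotProduct_mulVec_eq_zero hq hquq hv
  simp only [dotProduct, mulVec_diagonal, Fin.sum_univ_three, Pi.star_apply,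
    Complex.star_def] at h
  have : ((‖v 0‖ ^ 2 + ‖v 1‖ ^ 2 - ‖v 2‖ ^ 2 : ℝ) : ℂ) = 0 := by
    rw [← h]; push_cast [← Complex.conj_mul']; ring
  linarith [Complex.ofReal_eq_zero.mp this]

lemma norm_sq_add_norm_sq_le_of_mulVec_eq (hq : qᴴ = q) (hquq : q * 𝐮 * q = 0)
    (hv : q *ᵥ v = v) : ‖v 1‖ ^ 2 + ‖v 2‖ ^ 2 ≤ 2 * ‖𝐞 - q‖ ^ 2 * ‖v 2‖ ^ 2 := by
  have h := sum_norm_sq_mulVec_le (𝐞 - q) v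
  simp only [sub_mulVec, hv, Fin.sum_univ_three, Pi.sub_apply, mulVec_diagonal, cons_val_zero,
    cons_val_one, cons_val, one_mul, zero_mul, sub_self, zero_sub, norm_neg, norm_zero] at h
  have := norm_sq_add_norm_sq_eq_of_mulVec_eq hq hquq hv
  nlinarith

lemma half_le_norm_e_sub_sq_of_mulVec_eq (hq : qᴴ = q) (hquq : q * 𝐮 * q = 0)
    (hv : q *ᵥ v = v) {i : Fin 3} (hvi : v i ≠ 0) : 1 / 2 ≤ ‖𝐞 - q‖ ^ 2 := by
  have heq := norm_sq_add_norm_sq_eq_of_mulVec_eq hq hquq hv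
  have hle := norm_sq_add_norm_sq_le_of_mulVec_eq hq hquq hv
  have hi : ‖v i‖ ^ 2 ≤ ‖v 2‖ ^ 2 := by
    fin_cases i <;> simp only [Fin.zero_eta, Fin.mk_one, Fin.reduceFinMk] <;>
      nlinarith [sq_nonneg ‖v 0‖, sq_nonneg ‖v 1‖]
  have h2 : 0 < ‖v 2‖ ^ 2 := lt_of_lt_of_le (by positivity) hi
  nlinarith [sq_nonneg ‖v 1‖]

lemma eq_zero_and_norm_eq_of_mulVec_eq (hq : qᴴ = q) (hquq : q * 𝐮 * q = 0)
    (hv : q *ᵥ v = v) (hle : ‖𝐞 - q‖ ^ 2 ≤ 1 / 2) : v 1 = 0 ∧ ‖v 0‖ = ‖v 2‖ := by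
  have heq := norm_sq_add_norm_sq_eq_of_mulVec_eq hq hquq hv
  have hle' := norm_sq_add_norm_sq_le_of_mulVec_eq hq hquq hv
  have h1 : ‖v 1‖ ^ 2 = 0 := by nlinarith [sq_nonneg ‖v 1‖, sq_nonneg ‖v 2‖]
  refine ⟨by simpa using h1, ?_⟩
  rw [← sq_eq_sq₀ (norm_nonneg _) (norm_nonneg _)]
  linarith

end RangeVector

section ProjectionSet

variable {q : Matrix (Fin 3) (Fin 3) ℂ}

lemma one_le_norm_e : 1 ≤ ‖𝐞‖ := by
  simpa [l2_opNorm_diagonal] using norm_le_pi_norm (![1, 0, 0] : Fin 3 → ℂ) 0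

lemma one_div_sqrt_two_le_norm_e_sub (hq : qᴴ = q) (hqq : q * q = q) (hquq : q * 𝐮 * q = 0) :
    1 / √2 ≤ ‖𝐞 - q‖ := by
  rw [one_div, ← Real.sqrt_inv, Real.sqrt_le_left (norm_nonneg _), ← one_div]
  by_cases h0 : q = 0
  · rw [h0, sub_zero]
    nlinarith [one_le_norm_e]
  obtain ⟨i, j, hij⟩ : ∃ i j, q i j ≠ 0 := by
    by_contra! h
    exact h0 (ext h)
  exact half_le_norm_e_sub_sq_of_mulVec_eq hq hquq (mulVec_col_of_mul_self hqq j) hij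

lemma exists_eq_nearestProj (hq : qᴴ = q) (hqq : q * q = q) (hquq : q * 𝐮 * q = 0)
    (h0 : q ≠ 0) (hle : ‖𝐞 - q‖ ^ 2 ≤ 1 / 2) : ∃ ω : ℂ, ‖ω‖ = 1 ∧ q = nearestProj ω := by
  have hsym : ∀ i j, q i j = star (q j i) := fun i j => by rw [← conjTranspose_apply, hq]
  have hcol : ∀ j, q 1 j = 0 ∧ ‖q 0 j‖ = ‖q 2 j‖ := fun j =>
    eq_zero_and_norm_eq_of_mulVec_eq hq hquq (mulVec_col_of_mul_self hqq j) hle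
  have hrow : ∀ i, q i 1 = 0 := fun i => by rw [hsym, (hcol i).1, star_zero]
  have hdiag : ∀ j, q j j = ((2 * ‖q 2 j‖ ^ 2 : ℝ) : ℂ) := fun j => by
    rw [diag_eq_sum_norm_sq hq hqq, Fin.sum_univ_three, (hcol j).1, (hcol j).2, norm_zero]
    simp only [Complex.coe_algebraMap]
    congr 1; ring
  obtain ⟨t, ht⟩ : ∃ t, ‖q 0 2‖ = t := ⟨_, rfl⟩
  have h20 : ‖q 2 0‖ = t := by rw [hsym, norm_star, ht]
  have h00 : ‖q 0 0‖ = t := (hcol 0).2.trans h20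
  have h22 : ‖q 2 2‖ = t := (hcol 2).2.symm.trans ht
  have htt : t = 2 * t ^ 2 := by
    have h := congrArg norm (hdiag 0)
    rwa [h00, h20, Complex.norm_real, Real.norm_of_nonneg (by positivity)] at h
  have ht0 : t ≠ 0 := by
    rintro rfl
    rw [norm_eq_zero] at ht h00 h20 h22
    refine h0 (ext fun i j => ?_)
    fin_cases i <;> fin_cases j <;> simp [ht, h00, h20, h22, hrow, (hcol _).1]
  have ht2 : t = 1 / 2 := by
    have h := (mul_eq_zero.1 (by linear_combination -htt : t * (2 * t - 1) = 0)).resolve_left ht0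
    linarith
  have h00' : q 0 0 = 1 / 2 := by rw [hdiag, h20, ht2]; norm_num
  have h22' : q 2 2 = 1 / 2 := by rw [hdiag, h22, ht2]; norm_num
  refine ⟨2 * q 0 2, by rw [norm_mul, ht, ht2]; norm_num, ?_⟩
  ext i j
  fin_cases i <;> fin_cases j <;> simp [nearestProj, h00', h22', hsym 2 0, hrow, (hcol _).1]

end ProjectionSet

/-- In ℂ³ with u = diag(1,1,−1) and e = diag(1,0,0), the distance from e
to the set of orthogonal projections q with quq = 0 equals 1/√2, and it is attained
exactly at the projections (1/2)[[1,0,ω],[0,0,0],[conj ω,0,1]] with |ω| = 1. -/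
theorem stmt14 (u e : Matrix (Fin 3) (Fin 3) ℂ)
    (hu : u = Matrix.diagonal ![1, 1, -1])
    (he : e = Matrix.diagonal ![1, 0, 0]) :
    Metric.infDist e {q : Matrix (Fin 3) (Fin 3) ℂ | qᴴ = q ∧ q * q = q ∧ q * u * q = 0}
      = 1 / Real.sqrt 2 ∧
    (∀ q : Matrix (Fin 3) (Fin 3) ℂ, qᴴ = q → q * q = q → q * u * q = 0 →
      (‖e - q‖ = 1 / Real.sqrt 2 ↔
        ∃ ω : ℂ, ‖ω‖ = 1 ∧ q = (1/2 : ℂ) • !![1, 0, ω; 0, 0, 0; star ω, 0, 1])) := by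
  subst hu he
  have hmem : nearestProj 1 ∈ {q | qᴴ = q ∧ q * q = q ∧ q * 𝐮 * q = 0} :=
    ⟨conjTranspose_nearestProj, nearestProj_mul_self (by simp), nearestProj_mul_u_mul (by simp)⟩
  refine ⟨le_antisymm ?_ ((Metric.le_infDist ⟨_, hmem⟩).2 ?_),
    fun q hq hqq hquq => ⟨fun h => ?_, ?_⟩⟩
  · rw [← norm_e_sub_nearestProj (ω := 1) (by simp), ← dist_eq_norm]
    exact Metric.infDist_le_dist_of_mem hmem
  · rintro q ⟨hq, hqq, hquq⟩
    exact dist_eq_norm 𝐞 q ▸ one_div_sqrt_two_le_norm_e_sub hq hqq hquq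
  · have h2 : ‖𝐞 - q‖ ^ 2 = 1 / 2 := by rw [h, div_pow, Real.sq_sqrt zero_le_two]; norm_num
    have h0 : q ≠ 0 := by
      rintro rfl
      rw [sub_zero] at h2
      nlinarith [one_le_norm_e]
    exact exists_eq_nearestProj hq hqq hquq h0 h2.le
  · rintro ⟨ω, hω, rfl⟩
    exact norm_e_sub_nearestProj hω
end

section
/- In ℂ³ with u = diag(1,1,−1), every orthogonal projection q satisfying quq = 0 has rank at most 1; moreover q = 0 or q = q_{x,y} for some x,y with |x|²+|y|² = 1. -/
/-!
Since `u = 1 - 2 e₃ e₃*`, we get `q u q = q - 2 v v*` for the third column `v = q e₃`, so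
`q u q = 0` says `q = 2 v v*`, of rank at most one. As `q` is self-adjoint and idempotent,
`q₃₃ = ‖v‖²`, while `q = 2 v v*` gives `q₃₃ = 2 q₃₃²`. Hence either `q₃₃ = 0`, so `v = 0` and
`q = 0`, or `q₃₃ = 1/2` and `q = q_{x,y}` with `(x, y) = 2 (v₁, v₂)`.
-/

open scoped Matrix

namespace Matrix

variable {n R 𝕜 : Type*}

theorem mul_single_one_mul [Fintype n] [DecidableEq n] [CommRing R] (q : Matrix n n R) (k : n) :
    q * single k k 1 * q = vecMulVec (q.col k) (q.row k) := by
  rw [single_eq_single_vecMulVec_single, mul_vecMulVec, vecMulVec_mul, mulVec_single_one,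
    single_one_vecMul]

theorem eq_two_smul_vecMulVec_of_mul_reflection_mul_eq_zero [Fintype n] [DecidableEq n]
    [CommRing R] {q : Matrix n n R} (k : n) (hq : q * q = q)
    (h : q * (1 - (2 : R) • single k k 1) * q = 0) :
    q = (2 : R) • vecMulVec (q.col k) (q.row k) := by
  rwa [mul_sub, sub_mul, mul_one, hq, mul_smul_comm, smul_mul_assoc, mul_single_one_mul,
    sub_eq_zero] at h

theorem apply_self_eq_zero_or_eq_half_of_eq_two_smul_vecMulVec [Field R] {q : Matrix n n R}
    {k : n} (hq : q = (2 : R) • vecMulVec (q.col k) (q.row k)) : q k k = 0 ∨ q k k = 1 / 2 := by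
  have hkk : q k k = 2 * (q k k * q k k) := congrFun₂ hq k k
  have h : q k k * (2 * q k k - 1) = 0 := by linear_combination -hkk
  exact (mul_eq_zero.mp h).imp id fun h => eq_one_div_of_mul_eq_one_right (sub_eq_zero.mp h)

theorem IsHermitian.apply_self_eq_sum_norm_sq_of_mul_self [Fintype n] [RCLike 𝕜]
    {q : Matrix n n 𝕜} (hherm : q.IsHermitian) (hq : q * q = q) (k : n) :
    q k k = ((∑ i, ‖q i k‖ ^ 2 : ℝ) : 𝕜) := by
  calc q k k = (q * q) k k := by rw [hq]
    _ = ((∑ i, ‖q i k‖ ^ 2 : ℝ) : 𝕜) := by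
      rw [mul_apply]
      push_cast
      refine Finset.sum_congr rfl fun i _ => ?_
      rw [← hherm.apply k i]
      exact RCLike.conj_mul _

theorem IsHermitian.col_eq_zero_of_mul_self_of_apply_self_eq_zero [Fintype n] [RCLike 𝕜]
    {q : Matrix n n 𝕜} (hherm : q.IsHermitian) (hq : q * q = q) {k : n} (hk : q k k = 0) :
    q.col k = 0 := by
  rw [hherm.apply_self_eq_sum_norm_sq_of_mul_self hq, RCLike.ofReal_eq_zero,
    Finset.sum_eq_zero_iff_of_nonneg fun i _ => by positivity] at hk
  ext i
  simpa using hk i (Finset.mem_univ i)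

end Matrix

open Matrix in
/-- In ℂ³ with u = diag(1,1,−1), every orthogonal projection q with quq = 0
has rank at most 1; moreover q = 0 or q = q_{x,y} for some x, y with |x|² + |y|² = 1. -/
theorem stmt15 (u q : Matrix (Fin 3) (Fin 3) ℂ)
    (hu : u = Matrix.diagonal ![1, 1, -1])
    (hq1 : qᴴ = q) (hq2 : q * q = q) (hquq : q * u * q = 0) :
    q.rank ≤ 1 ∧
    (q = 0 ∨ ∃ x y : ℂ, ‖x‖^2 + ‖y‖^2 = 1 ∧
      q = (1/2 : ℂ) • !![x * star x, x * star y, x;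
                         star x * y, y * star y, y;
                         star x, star y, 1]) := by
  have hherm : q.IsHermitian := hq1
  have hreflection : u = 1 - (2 : ℂ) • single 2 2 1 := by
    subst hu
    ext i j
    fin_cases i <;> fin_cases j <;> norm_num [one_apply, single_apply, Fin.ext_iff]
  have hq := eq_two_smul_vecMulVec_of_mul_reflection_mul_eq_zero 2 hq2 (hreflection ▸ hquq)
  have hentry (i j : Fin 3) : q i j = 2 * (q i 2 * q 2 j) := congrFun₂ hq i j
  refine ⟨hq ▸ smul_vecMulVec (2 : ℂ) (q.col 2) (q.row 2) ▸ rank_vecMulVec_le _ _, ?_⟩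
  rcases apply_self_eq_zero_or_eq_half_of_eq_two_smul_vecMulVec hq with hzero | hhalf
  · left
    rw [hq, hherm.col_eq_zero_of_mul_self_of_apply_self_eq_zero hq2 hzero]
    simp
  · right
    refine ⟨2 * q 0 2, 2 * q 1 2, ?_, ?_⟩
    · have hnorm := congrArg RCLike.re (hherm.apply_self_eq_sum_norm_sq_of_mul_self hq2 2)
      rw [RCLike.ofReal_re, Fin.sum_univ_three, hhalf] at hnorm
      norm_num [norm_mul] at hnorm ⊢
      linarith
    · ext i j
      rw [hentry i j, ← hherm.apply 2 j]
      fin_cases i <;> fin_cases j <;> simp [hhalf] <;> ring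
end
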